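/- Let (a,b) and (c,d) be two pairs of coprime positive integers with SW_{(1,1)}(a,b) = SW_{(1,1)}(c,d). Then A_{(a,b)}(n) = A_{(c,d)}(n) for every integer n ≥ 0. -/
import Mathlib


/-- One step in the random Fibonacci tree; `true` means a right branch:
from the pair `(x, y)`, a right branch leads to `(y, x + y)` and a left
branch leads to `(y, |x - y|)`. -/
def fibStep (p : ℤ × ℤ) (b : Bool) : ℤ × ℤ :=
  if b then (p.2, p.1 + p.2) else (p.2, |p.1 - p.2|)

/-- `fibPairs w i = (g_i, g_{i+1})` for the walk determined by the branch
sequence `w`, where `w j` is the `(j+1)`-st branch choice. -/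
def fibPairs (w : ℕ → Bool) : ℕ → ℤ × ℤ
  | 0 => (1, 1)
  | i + 1 => fibStep (fibPairs w i) (w i)

/-- Extend a branch sequence of length `m` by dummy values. -/
def extendW {m : ℕ} (w : Fin m → Bool) : ℕ → Bool :=
  fun i => if h : i < m then w ⟨i, h⟩ else false

/-- The ending pair `(g_m, g_{m+1})` of the walk determined by a branch
sequence of length `m`. -/
def endPair {m : ℕ} (w : Fin m → Bool) : ℤ × ℤ := fibPairs (extendW w) m

/-- `A(n)`: the number of branch sequences of length `3n` whose walk has
ending pair `(1,1)`. -/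
noncomputable def A11 (n : ℕ) : ℕ :=
  Nat.card {w : Fin (3 * n) → Bool // endPair w = (1, 1)}

/-- `S(n)`: the number of branch sequences of length `3n` whose walk has ending
pair `(1,1)` and no index `1 ≤ i ≤ 3n - 1` with `(g_i, g_{i+1}) = (1,1)`. -/
noncomputable def Sprim (n : ℕ) : ℕ :=
  Nat.card {w : Fin (3 * n) → Bool //
    endPair w = (1, 1) ∧
    ∀ i, 1 ≤ i → i ≤ 3 * n - 1 → fibPairs (extendW w) i ≠ (1, 1)}

/-- `B(n)`: the number of branch sequences of length `3n` whose walk has ending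
pair `(1,1)` and satisfies `g_i ≠ 0` for all `0 ≤ i ≤ 3n + 1`. -/
noncomputable def Bnz (n : ℕ) : ℕ :=
  Nat.card {w : Fin (3 * n) → Bool //
    endPair w = (1, 1) ∧
    ∀ i, i ≤ 3 * n + 1 → (fibPairs (extendW w) i).1 ≠ 0}

/-- `m(a,b)`: `0` if `a, b` both odd, `1` if `a` odd and `b` even,
`2` if `a` even (and `b` odd). -/
def pairOffset (a b : ℕ) : ℕ :=
  if Odd a then (if Odd b then 0 else 1) else 2

/-- `A_{(a,b)}(n)`: the number of branch sequences of length `3n + m(a,b)`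
whose walk has ending pair `(a, b)`. -/
noncomputable def Aab (a b : ℕ) (n : ℕ) : ℕ :=
  Nat.card {w : Fin (3 * n + pairOffset a b) → Bool //
    endPair w = ((a : ℤ), (b : ℤ))}

/-- `SW_{(1,1)}(a,b)`: the least `m` such that some branch sequence of
length `m` has walk with ending pair `(a, b)`. -/
noncomputable def SW (a b : ℕ) : ℕ :=
  sInf {m : ℕ | ∃ w : Fin m → Bool, endPair w = ((a : ℤ), (b : ℤ))}

noncomputable def fCnt (q : ℤ × ℤ) (L : ℕ) : ℕ := Nat.card {w : Fin L → Bool // endPair w = q}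

lemma fibPairs_congr (w w' : ℕ → Bool) : ∀ i, (∀ j, j < i → w j = w' j) →
    fibPairs w i = fibPairs w' i
  | 0, _ => rfl
  | i+1, h => by
      simp only [fibPairs]
      rw [fibPairs_congr w w' i (fun j hj => h j (Nat.lt_succ_of_lt hj)),
        h i (Nat.lt_succ_self i)]

lemma fibPairs_nonneg (w : ℕ → Bool) : ∀ i, 0 ≤ (fibPairs w i).1 ∧ 0 ≤ (fibPairs w i).2
  | 0 => ⟨zero_le_one, zero_le_one⟩
  | i+1 => by
      obtain ⟨h1, h2⟩ := fibPairs_nonneg w i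
      show 0 ≤ (fibStep _ _).1 ∧ 0 ≤ (fibStep _ _).2
      unfold fibStep
      cases w i
      · refine ⟨by simpa using h2, by simp [abs_nonneg]⟩
      · exact ⟨by simpa using h2, by simpa using add_nonneg h1 h2⟩

lemma extendW_snoc_lt {L : ℕ} (v : Fin L → Bool) (β : Bool) (j : ℕ) (hj : j < L) :
    extendW (Fin.snoc v β) j = extendW v j := by
  have hj' : j < L + 1 := Nat.lt_succ_of_lt hj
  unfold extendW
  rw [dif_pos hj', dif_pos hj]
  have : (⟨j, hj'⟩ : Fin (L+1)) = Fin.castSucc ⟨j, hj⟩ := rfl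
  rw [this, Fin.snoc_castSucc]

lemma endPair_snoc {L : ℕ} (v : Fin L → Bool) (β : Bool) :
    endPair (Fin.snoc v β) = fibStep (endPair v) β := by
  show fibStep (fibPairs (extendW (Fin.snoc v β)) L) (extendW (Fin.snoc v β) L) = _
  congr 1
  · exact fibPairs_congr _ _ L (fun j hj => extendW_snoc_lt v β j hj)
  · have h1 : extendW (Fin.snoc v β) L = (Fin.snoc v β : Fin (L+1) → Bool) (Fin.last L) := by
      unfold extendW
      rw [dif_pos (Nat.lt_succ_self L)]
      rfl
    rw [h1, Fin.snoc_last]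

def snocEquiv (q : ℤ × ℤ) (L : ℕ) :
    {w : Fin (L+1) → Bool // endPair w = q} ≃
      {vβ : (Fin L → Bool) × Bool // fibStep (endPair vβ.1) vβ.2 = q} where
  toFun w := ⟨(Fin.init w.1, w.1 (Fin.last L)), by
    rw [← endPair_snoc, Fin.snoc_init_self]; exact w.2⟩
  invFun p := ⟨Fin.snoc p.1.1 p.1.2, by rw [endPair_snoc]; exact p.2⟩
  left_inv w := Subtype.ext (Fin.snoc_init_self w.1)
  right_inv p := Subtype.ext (by simp)

def boolSplit {α : Type*} (P : α → Bool → Prop) :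
    {x : α × Bool // P x.1 x.2} ≃ {v : α // P v true} ⊕ {v : α // P v false} where
  toFun x := match x with
    | ⟨(v, true), h⟩ => Sum.inl ⟨v, h⟩
    | ⟨(v, false), h⟩ => Sum.inr ⟨v, h⟩
  invFun s := match s with
    | Sum.inl ⟨v, h⟩ => ⟨(v, true), h⟩
    | Sum.inr ⟨v, h⟩ => ⟨(v, false), h⟩
  left_inv x := by rcases x with ⟨⟨v, b⟩, h⟩; cases b <;> rfl
  right_inv s := by rcases s with ⟨v, h⟩ | ⟨v, h⟩ <;> rfl

def orSplit {α : Type*} (p q : α → Prop) [DecidablePred p]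
    (hpq : ∀ a, p a → q a → False) :
    {x : α // p x ∨ q x} ≃ {x // p x} ⊕ {x // q x} where
  toFun x := if h : p x.1 then Sum.inl ⟨x.1, h⟩ else Sum.inr ⟨x.1, x.2.resolve_left h⟩
  invFun s := match s with
    | Sum.inl ⟨v, h⟩ => ⟨v, Or.inl h⟩
    | Sum.inr ⟨v, h⟩ => ⟨v, Or.inr h⟩
  left_inv x := by by_cases h : p x.1 <;> simp [h]
  right_inv s := by
    rcases s with ⟨v, h⟩ | ⟨v, h⟩
    · simp [h]
    · have hnp : ¬ p v := fun hp => hpq v hp h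
      simp [hnp]

lemma fibStep_true_eq (p : ℤ × ℤ) (a b : ℤ) : fibStep p true = (a, b) ↔ p = (b - a, a) := by
  simp only [fibStep, if_pos, Prod.ext_iff]
  constructor <;> intro h <;> omega

lemma fibStep_false_eq (p : ℤ × ℤ) (a b : ℤ) (hb : 0 < b) :
    fibStep p false = (a, b) ↔ (p = (a + b, a) ∨ p = (a - b, a)) := by
  simp only [fibStep, if_neg, Prod.ext_iff, Bool.false_eq_true, not_false_iff]
  rw [abs_eq hb.le]
  constructor <;> intro h <;> omega

lemma fibStep_false_eq0 (p : ℤ × ℤ) (a : ℤ) :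
    fibStep p false = (a, 0) ↔ p = (a, a) := by
  simp only [fibStep, if_neg, Prod.ext_iff, Bool.false_eq_true, not_false_iff, abs_eq_zero]
  constructor <;> intro h <;> omega

lemma fCnt_succ_pos (a b : ℤ) (hb : 0 < b) (L : ℕ) :
    fCnt (a, b) (L+1) = fCnt (b - a, a) L + (fCnt (a + b, a) L + fCnt (a - b, a) L) := by
  have disj : ∀ v : Fin L → Bool, endPair v = (a + b, a) → endPair v = (a - b, a) → False := by
    intro v h1 h2
    rw [h1] at h2
    have : a + b = a - b := (Prod.ext_iff.mp h2).1
    omega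
  calc fCnt (a, b) (L+1)
      = Nat.card {vβ : (Fin L → Bool) × Bool // fibStep (endPair vβ.1) vβ.2 = (a, b)} :=
        Nat.card_congr (snocEquiv (a, b) L)
    _ = Nat.card {v : Fin L → Bool // fibStep (endPair v) true = (a, b)}
        + Nat.card {v : Fin L → Bool // fibStep (endPair v) false = (a, b)} := by
        rw [Nat.card_congr (boolSplit (fun v β => fibStep (endPair v) β = (a, b))),
          Nat.card_sum]
    _ = fCnt (b - a, a) L + (fCnt (a + b, a) L + fCnt (a - b, a) L) := by
        congr 1
        · exact Nat.card_congr (Equiv.subtypeEquivRight fun v => fibStep_true_eq _ a b)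
        · rw [Nat.card_congr (Equiv.subtypeEquivRight fun v => fibStep_false_eq _ a b hb),
            Nat.card_congr (orSplit _ _ disj), Nat.card_sum]
          rfl

lemma fCnt_succ_zero (a : ℤ) (L : ℕ) :
    fCnt (a, 0) (L+1) = fCnt (0 - a, a) L + fCnt (a, a) L := by
  calc fCnt (a, 0) (L+1)
      = Nat.card {vβ : (Fin L → Bool) × Bool // fibStep (endPair vβ.1) vβ.2 = (a, 0)} :=
        Nat.card_congr (snocEquiv (a, 0) L)
    _ = Nat.card {v : Fin L → Bool // fibStep (endPair v) true = (a, 0)}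
        + Nat.card {v : Fin L → Bool // fibStep (endPair v) false = (a, 0)} := by
        rw [Nat.card_congr (boolSplit (fun v β => fibStep (endPair v) β = (a, 0))),
          Nat.card_sum]
    _ = fCnt (0 - a, a) L + fCnt (a, a) L := by
        congr 1
        · exact Nat.card_congr (Equiv.subtypeEquivRight fun v => fibStep_true_eq _ a 0)
        · exact Nat.card_congr (Equiv.subtypeEquivRight fun v => fibStep_false_eq0 _ a)

lemma fCnt_neg (x y : ℤ) (h : x < 0 ∨ y < 0) (L : ℕ) : fCnt (x, y) L = 0 := by
  have : IsEmpty {w : Fin L → Bool // endPair w = (x, y)} := by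
    constructor
    rintro ⟨w, hw⟩
    have h2 := fibPairs_nonneg (extendW w) L
    rw [show fibPairs (extendW w) L = endPair w from rfl, hw] at h2
    simp only at h2
    omega
  exact Nat.card_of_isEmpty

lemma fCnt_one : fCnt ((1 : ℤ), (1 : ℤ)) 0 = 1 := by
  rw [fCnt]
  have hall : ∀ w : Fin 0 → Bool, endPair w = ((1 : ℤ), (1 : ℤ)) := fun w => rfl
  rw [Nat.card_congr (Equiv.subtypeUnivEquiv hall)]
  simp [Nat.card_eq_fintype_card]

def Ew : ℕ → ℕ → ℕ
  | a, b =>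
    if a = 0 ∨ b = 0 ∨ a = b then 0
    else Ew (if a < b then b - a else a - b) a + 1
termination_by a b => 2 * (if a < b then b else a) + (if b < a then 1 else 0)
decreasing_by
  simp_wf
  split_ifs <;> omega

lemma Ew_base {a b : ℕ} (h : a = 0 ∨ b = 0 ∨ a = b) : Ew a b = 0 := by
  rw [Ew]
  simp [h]

lemma Ew_step {a b : ℕ} (ha : 0 < a) (hb : 0 < b) (hab : a ≠ b) :
    Ew a b = Ew (if a < b then b - a else a - b) a + 1 := by
  conv_lhs => rw [Ew]
  rw [if_neg]
  push_neg
  exact ⟨by omega, by omega, hab⟩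

lemma Ew_succ_lt {a b : ℕ} (ha : 0 < a) (hlt : a < b) : Ew a b = Ew (b - a) a + 1 := by
  rw [Ew_step ha (by omega) (by omega), if_pos hlt]

lemma Ew_succ_gt {a b : ℕ} (hb : 0 < b) (hlt : b < a) : Ew a b = Ew (a - b) a + 1 := by
  rw [Ew_step (by omega) hb (by omega), if_neg (by omega)]

lemma Ew_grow {a b : ℕ} (ha : 0 < a) (hb : 0 < b) : Ew (a + b) a = Ew a b + 2 := by
  have h1 : Ew (a + b) a = Ew b (a + b) + 1 := by
    rw [Ew_succ_gt ha (by omega)]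
    congr 2
    omega
  have h2 : Ew b (a + b) = Ew a b + 1 := by
    rw [Ew_succ_lt hb (by omega)]
    congr 2
    omega
  omega

lemma Ew_eq_zero {a b : ℕ} (ha : 0 < a) (hb : 0 < b) (hcop : Nat.Coprime a b)
    (h : Ew a b = 0) : a = 1 ∧ b = 1 := by
  by_cases hab : a = b
  · subst hab
    have h1 : a = 1 := by rwa [Nat.Coprime, Nat.gcd_self] at hcop
    exact ⟨h1, h1⟩
  · rw [Ew_step ha hb hab] at h
    omega

lemma cop_sub {a b : ℕ} (h : Nat.Coprime a b) (hab : a ≤ b) : Nat.Coprime (b - a) a := by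
  have h1 : Nat.gcd (b - a) a ∣ b := by
    have h2 := Nat.dvd_add (Nat.gcd_dvd_left (b - a) a) (Nat.gcd_dvd_right (b - a) a)
    rwa [Nat.sub_add_cancel hab] at h2
  exact Nat.dvd_one.mp (h ▸ Nat.dvd_gcd (Nat.gcd_dvd_right _ _) h1)

lemma cop_sub' {a b : ℕ} (h : Nat.Coprime a b) (hab : b ≤ a) : Nat.Coprime (a - b) a := by
  have h1 : Nat.gcd (a - b) a ∣ b := by
    have := Nat.dvd_sub (Nat.gcd_dvd_right (a - b) a) (Nat.gcd_dvd_left (a - b) a)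
    rwa [Nat.sub_sub_self hab] at this
  exact Nat.dvd_one.mp (h ▸ Nat.dvd_gcd (Nat.gcd_dvd_right _ _) h1)

lemma cop_add {a b : ℕ} (h : Nat.Coprime a b) : Nat.Coprime (a + b) a := by
  have h1 : Nat.gcd (a + b) a ∣ b := by
    have := Nat.dvd_sub (Nat.gcd_dvd_left (a + b) a) (Nat.gcd_dvd_right (a + b) a)
    rwa [Nat.add_sub_cancel_left] at this
  exact Nat.dvd_one.mp (h ▸ Nat.dvd_gcd (Nat.gcd_dvd_right _ _) h1)

lemma cop_t {a b : ℕ} (h : Nat.Coprime a b) (hab : a ≠ b) :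
    Nat.Coprime (if a < b then b - a else a - b) a := by
  split_ifs with hlt
  · exact cop_sub h hlt.le
  · exact cop_sub' h (by omega)

lemma exists_walk : ∀ n a b, 0 < a → 0 < b → Nat.Coprime a b → Ew a b = n →
    ∃ w : Fin n → Bool, endPair w = ((a : ℤ), (b : ℤ)) := by
  intro n
  induction n using Nat.strong_induction_on with
  | _ n IH =>
    intro a b ha hb hcop hE
    by_cases hab : a = b
    · subst hab
      have ha1 : a = 1 := by rwa [Nat.Coprime, Nat.gcd_self] at hcop
      subst ha1
      have hn : n = 0 := by rw [← hE, Ew_base (by omega)]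
      subst hn
      refine ⟨fun _ => false, ?_⟩
      show fibPairs _ 0 = _
      norm_num [fibPairs]
    · set t := if a < b then b - a else a - b with ht
      have hEs : Ew a b = Ew t a + 1 := Ew_step ha hb hab
      have ht0 : 0 < t := by rw [ht]; split_ifs <;> omega
      obtain ⟨m, hm⟩ : ∃ m, n = m + 1 := ⟨Ew t a, by omega⟩
      subst hm
      obtain ⟨w', hw'⟩ := IH m (by omega) t a ht0 ha (cop_t hcop hab) (by omega)
      by_cases hlt : a < b
      · have htv : t = b - a := by rw [ht, if_pos hlt]
        refine ⟨Fin.snoc w' true, ?_⟩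
        rw [endPair_snoc, hw', fibStep_true_eq, htv]
        push_cast [hlt.le]
        rfl
      · have htv : t = a - b := by rw [ht, if_neg hlt]
        refine ⟨Fin.snoc w' false, ?_⟩
        rw [endPair_snoc, hw', fibStep_false_eq _ _ _ (by exact_mod_cast hb)]
        right
        rw [htv]
        push_cast [show b ≤ a by omega]
        rfl

lemma endPair_nonneg {L : ℕ} (w : Fin L → Bool) : 0 ≤ (endPair w).1 ∧ 0 ≤ (endPair w).2 :=
  fibPairs_nonneg (extendW w) L

lemma length_ge : ∀ L (w : Fin L → Bool) (a b : ℕ), 0 < a → 0 < b → Nat.Coprime a b →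
    endPair w = ((a : ℤ), (b : ℤ)) → Ew a b ≤ L := by
  intro L
  induction L with
  | zero =>
    intro w a b ha hb hcop hw
    have h1 : ((a : ℤ), (b : ℤ)) = ((1 : ℤ), (1 : ℤ)) := by
      rw [← hw]; rfl
    have h2 : a = 1 ∧ b = 1 := by
      simp only [Prod.mk.injEq] at h1
      exact ⟨by exact_mod_cast h1.1, by exact_mod_cast h1.2⟩
    rw [h2.1, h2.2, Ew_base (by omega)]
  | succ L IH =>
    intro w a b ha hb hcop hw
    by_cases hab : a = b
    · subst hab
      have ha1 : a = 1 := by rwa [Nat.Coprime, Nat.gcd_self] at hcop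
      subst ha1
      rw [Ew_base (by omega)]
      omega
    · have hsnoc : fibStep (endPair (Fin.init w)) (w (Fin.last L)) = ((a : ℤ), (b : ℤ)) := by
        rw [← endPair_snoc, Fin.snoc_init_self, hw]
      have hnn := endPair_nonneg (Fin.init w)
      cases hβ : w (Fin.last L) with
      | true =>
        rw [hβ, fibStep_true_eq] at hsnoc
        have hle : (a : ℤ) ≤ b := by
          have := hnn.1
          rw [hsnoc] at this
          simp only at this
          omega
        have hlt : a < b := by
          have : a ≤ b := by exact_mod_cast hle
          omega
        have hv : endPair (Fin.init w) = (((b - a : ℕ) : ℤ), (a : ℤ)) := by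
          rw [hsnoc]
          push_cast [hlt.le]
          rfl
        have h1 := IH (Fin.init w) (b - a) a (by omega) ha (cop_sub hcop hlt.le) hv
        rw [Ew_succ_lt ha hlt]
        omega
      | false =>
        rw [hβ, fibStep_false_eq _ _ _ (by exact_mod_cast hb)] at hsnoc
        rcases hsnoc with hp | hp
        · have hv : endPair (Fin.init w) = (((a + b : ℕ) : ℤ), (a : ℤ)) := by
            rw [hp]; push_cast; rfl
          have h1 := IH (Fin.init w) (a + b) a (by omega) ha (cop_add hcop) hv
          have h2 := Ew_grow ha hb
          omega
        · have hle : (b : ℤ) ≤ a := by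
            have := hnn.1
            rw [hp] at this
            simp only at this
            omega
          have hlt : b < a := by
            have : b ≤ a := by exact_mod_cast hle
            omega
          have hv : endPair (Fin.init w) = (((a - b : ℕ) : ℤ), (a : ℤ)) := by
            rw [hp]
            push_cast [hlt.le]
            rfl
          have h1 := IH (Fin.init w) (a - b) a (by omega) ha (cop_sub' hcop hlt.le) hv
          rw [Ew_succ_gt hb hlt]
          omega

lemma fCnt_lt {a b : ℕ} (ha : 0 < a) (hb : 0 < b) (hcop : Nat.Coprime a b) {L : ℕ}
    (hL : L < Ew a b) : fCnt ((a : ℤ), (b : ℤ)) L = 0 := by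
  have : IsEmpty {w : Fin L → Bool // endPair w = ((a : ℤ), (b : ℤ))} := by
    constructor
    rintro ⟨w, hw⟩
    have := length_ge L w a b ha hb hcop hw
    omega
  exact Nat.card_of_isEmpty

lemma fCnt_step (a b : ℕ) (ha : 0 < a) (hb : 0 < b) (hab : a ≠ b) (L : ℕ) :
    fCnt ((a : ℤ), (b : ℤ)) (L + 1)
      = fCnt (((if a < b then b - a else a - b : ℕ) : ℤ), (a : ℤ)) L
        + fCnt (((a + b : ℕ) : ℤ), (a : ℤ)) L := by
  rw [fCnt_succ_pos (a : ℤ) (b : ℤ) (by exact_mod_cast hb) L]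
  rcases lt_or_gt_of_ne hab with h | h
  · rw [fCnt_neg ((a : ℤ) - b) a (Or.inl (by push_cast; omega)) L]
    rw [show ((b : ℤ) - a) = (((b - a : ℕ) : ℤ)) by push_cast [h.le]; ring]
    rw [show ((a : ℤ) + b) = (((a + b : ℕ) : ℤ)) by push_cast; ring]
    rw [if_pos h]
    omega
  · rw [fCnt_neg ((b : ℤ) - a) a (Or.inl (by push_cast; omega)) L]
    rw [show ((a : ℤ) - b) = (((a - b : ℕ) : ℤ)) by push_cast [h.le]; ring]
    rw [show ((a : ℤ) + b) = (((a + b : ℕ) : ℤ)) by push_cast; ring]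
    rw [if_neg (by omega)]
    omega

def Nk : ℕ → ℕ → ℕ
  | _, 0 => 1
  | 0, k+1 => 4 * Nk 0 k + Nk 2 k
  | s+1, k+1 => Nk s (k+1) + Nk (s+3) k
termination_by s k => (k, s)

lemma Nk_zero (s : ℕ) : Nk s 0 = 1 := by rw [Nk]
lemma Nk_zero_succ (k : ℕ) : Nk 0 (k+1) = 4 * Nk 0 k + Nk 2 k := by rw [Nk]
lemma Nk_succ_succ (s k : ℕ) : Nk (s+1) (k+1) = Nk s (k+1) + Nk (s+3) k := by rw [Nk]

lemma Ew_21 : Ew 2 1 = 2 := by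
  have h1 : Ew 2 1 = Ew 1 2 + 1 := by
    have := Ew_succ_gt (a := 2) (b := 1) (by norm_num) (by norm_num)
    simpa using this
  have h2 : Ew 1 2 = Ew 1 1 + 1 := by
    have := Ew_succ_lt (a := 1) (b := 2) (by norm_num) (by norm_num)
    simpa using this
  have h3 : Ew 1 1 = 0 := Ew_base (by omega)
  omega

lemma main_count : ∀ k s a b, 0 < a → 0 < b → Nat.Coprime a b → Ew a b = s →
    fCnt ((a : ℤ), (b : ℤ)) (s + 3 * k) = Nk s k := by
  intro k
  induction k with
  | zero =>
    intro s
    induction s with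
    | zero =>
      intro a b ha hb hcop hE
      obtain ⟨ha1, hb1⟩ := Ew_eq_zero ha hb hcop hE
      subst ha1; subst hb1
      rw [Nk_zero]
      show fCnt ((1 : ℤ), (1 : ℤ)) 0 = 1
      exact fCnt_one
    | succ s IHs =>
      intro a b ha hb hcop hE
      have hab : a ≠ b := by
        intro h
        rw [Ew_base (Or.inr (Or.inr h))] at hE
        omega
      set t := if a < b then b - a else a - b with ht
      have hEs : Ew a b = Ew t a + 1 := Ew_step ha hb hab
      have ht0 : 0 < t := by rw [ht]; split_ifs <;> omega
      have hEt : Ew t a = s := by omega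
      show fCnt _ (s + 1) = _
      have := fCnt_step a b ha hb hab s
      rw [show s + 1 + 3 * 0 = s + 1 by ring, this, ← ht]
      have h1 : fCnt ((t : ℤ), (a : ℤ)) s = Nk s 0 := by
        have := IHs t a ht0 ha (cop_t hcop hab) hEt
        rwa [show s + 3 * 0 = s by ring] at this
      have h2 : fCnt (((a + b : ℕ) : ℤ), (a : ℤ)) s = 0 :=
        fCnt_lt (by omega) ha (cop_add hcop) (by rw [Ew_grow ha hb]; omega)
      rw [h1, h2, Nk_zero, Nk_zero]
  | succ k IHk =>
    intro s
    induction s with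
    | zero =>
      intro a b ha hb hcop hE
      obtain ⟨ha1, hb1⟩ := Ew_eq_zero ha hb hcop hE
      subst ha1; subst hb1
      show fCnt ((1 : ℤ), (1 : ℤ)) (0 + 3 * (k + 1)) = Nk 0 (k + 1)
      have e11 : fCnt ((1 : ℤ), (1 : ℤ)) (0 + 3 * (k + 1))
          = fCnt (0, 1) (3 * k + 2) + (fCnt (2, 1) (3 * k + 2) + fCnt (0, 1) (3 * k + 2)) := by
        rw [show 0 + 3 * (k + 1) = (3 * k + 2) + 1 by ring, fCnt_succ_pos 1 1 one_pos]
        norm_num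
      have e01 : fCnt ((0 : ℤ), (1 : ℤ)) (3 * k + 2)
          = 2 * fCnt (1, 0) (3 * k + 1) := by
        rw [show 3 * k + 2 = (3 * k + 1) + 1 by ring, fCnt_succ_pos 0 1 one_pos]
        rw [fCnt_neg (0 - 1) 0 (Or.inl (by norm_num)) (3 * k + 1)]
        norm_num
        omega
      have e10 : fCnt ((1 : ℤ), (0 : ℤ)) (3 * k + 1) = fCnt (1, 1) (3 * k) := by
        rw [show 3 * k + 1 = 3 * k + 1 by rfl, fCnt_succ_zero 1 (3 * k)]
        rw [fCnt_neg (0 - 1) 1 (Or.inl (by norm_num)) (3 * k)]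
        omega
      have e11' : fCnt ((1 : ℤ), (1 : ℤ)) (3 * k) = Nk 0 k := by
        have := IHk 0 1 1 one_pos one_pos (Nat.coprime_one_left 1) (Ew_base (by omega))
        rwa [show (0 : ℕ) + 3 * k = 3 * k by ring, Nat.cast_one] at this
      have e21 : fCnt ((2 : ℤ), (1 : ℤ)) (3 * k + 2) = Nk 2 k := by
        have := IHk 2 2 1 (by norm_num) one_pos (by norm_num) Ew_21
        rwa [show (2 : ℕ) + 3 * k = 3 * k + 2 by ring, Nat.cast_ofNat, Nat.cast_one] at this
      rw [e11, e01, e10, e11', e21, Nk_zero_succ]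
      ring
    | succ s IHs =>
      intro a b ha hb hcop hE
      have hab : a ≠ b := by
        intro h
        rw [Ew_base (Or.inr (Or.inr h))] at hE
        omega
      set t := if a < b then b - a else a - b with ht
      have hEs : Ew a b = Ew t a + 1 := Ew_step ha hb hab
      have ht0 : 0 < t := by rw [ht]; split_ifs <;> omega
      have hEt : Ew t a = s := by omega
      rw [show s + 1 + 3 * (k + 1) = (s + 3 * (k + 1)) + 1 by ring,
        fCnt_step a b ha hb hab, ← ht]
      have h1 : fCnt ((t : ℤ), (a : ℤ)) (s + 3 * (k + 1)) = Nk s (k + 1) :=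
        IHs t a ht0 ha (cop_t hcop hab) hEt
      have h2 : fCnt (((a + b : ℕ) : ℤ), (a : ℤ)) (s + 3 * (k + 1)) = Nk (s + 3) k := by
        have := IHk (s + 3) (a + b) a (by omega) ha (cop_add hcop)
          (by rw [Ew_grow ha hb]; omega)
        rwa [show s + 3 + 3 * k = s + 3 * (k + 1) by ring] at this
      rw [h1, h2, Nk_succ_succ]

lemma Ew_mod3 : ∀ n a b, 0 < a → 0 < b → Nat.Coprime a b → Ew a b = n →
    n % 3 = pairOffset a b := by
  intro n
  induction n using Nat.strong_induction_on with
  | _ n IH =>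
    intro a b ha hb hcop hE
    have hcop2 : ¬(a % 2 = 0 ∧ b % 2 = 0) := by
      rintro ⟨h1, h2⟩
      have : 2 ∣ Nat.gcd a b := Nat.dvd_gcd (by omega) (by omega)
      rw [hcop] at this
      omega
    by_cases hab : a = b
    · subst hab
      have ha1 : a = 1 := by rwa [Nat.Coprime, Nat.gcd_self] at hcop
      subst ha1
      rw [Ew_base (by omega)] at hE
      subst hE
      simp [pairOffset]
    · set t := if a < b then b - a else a - b with ht
      have hEs : Ew a b = Ew t a + 1 := Ew_step ha hb hab
      have ht0 : 0 < t := by rw [ht]; split_ifs <;> omega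
      have ht2 : t % 2 = (a + b) % 2 := by rw [ht]; split_ifs <;> omega
      obtain ⟨m, hm⟩ : ∃ m, n = m + 1 := ⟨Ew t a, by omega⟩
      have hIH := IH m (by omega) t a ht0 ha (cop_t hcop hab) (by omega)
      rcases Nat.mod_two_eq_zero_or_one a with ha2 | ha2 <;>
        rcases Nat.mod_two_eq_zero_or_one b with hb2 | hb2
      · exact absurd ⟨ha2, hb2⟩ hcop2
      all_goals {
        rcases Nat.mod_two_eq_zero_or_one t with htv | htv <;>
          simp [pairOffset, Nat.odd_iff, htv, ha2, hb2] at hIH ⊢ <;>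
          omega
      }

lemma SW_eq_Ew (a b : ℕ) (ha : 0 < a) (hb : 0 < b) (hcop : Nat.Coprime a b) :
    SW a b = Ew a b := by
  have hmem : Ew a b ∈ {m : ℕ | ∃ w : Fin m → Bool, endPair w = ((a : ℤ), (b : ℤ))} :=
    exists_walk (Ew a b) a b ha hb hcop rfl
  refine le_antisymm (Nat.sInf_le hmem) ?_
  refine le_csInf ⟨_, hmem⟩ ?_
  rintro m ⟨w, hw⟩
  exact length_ge m w a b ha hb hcop hw

/-- If two pairs of coprime positive integers have the same shortest-walk
length from the root `(1,1)`, then `A_{(a,b)}(n) = A_{(c,d)}(n)` for all `n`. -/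
theorem Aab_eq_of_SW_eq (a b c d : ℕ) (ha : 0 < a) (hb : 0 < b) (hc : 0 < c)
    (hd : 0 < d) (hab : Nat.Coprime a b) (hcd : Nat.Coprime c d)
    (h : SW a b = SW c d) :
    ∀ n : ℕ, Aab a b n = Aab c d n := by
  intro n
  have hE : Ew a b = Ew c d := by
    rw [← SW_eq_Ew a b ha hb hab, ← SW_eq_Ew c d hc hd hcd]
    exact h
  have hm1 : pairOffset a b = Ew a b % 3 :=
    (Ew_mod3 (Ew a b) a b ha hb hab rfl).symm
  have hm2 : pairOffset c d = Ew a b % 3 := by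
    rw [hE]
    exact (Ew_mod3 (Ew c d) c d hc hd hcd rfl).symm
  have hA1 : Aab a b n = fCnt ((a : ℤ), (b : ℤ)) (3 * n + pairOffset a b) := rfl
  have hA2 : Aab c d n = fCnt ((c : ℤ), (d : ℤ)) (3 * n + pairOffset c d) := rfl
  by_cases hq : Ew a b / 3 ≤ n
  · have hk1 : 3 * n + pairOffset a b = Ew a b + 3 * (n - Ew a b / 3) := by omega
    have hk2 : 3 * n + pairOffset c d = Ew a b + 3 * (n - Ew a b / 3) := by omega
    rw [hA1, hA2, hk1, hk2,
      main_count (n - Ew a b / 3) (Ew a b) a b ha hb hab rfl,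
      main_count (n - Ew a b / 3) (Ew a b) c d hc hd hcd hE.symm]
  · have hlt1 : 3 * n + pairOffset a b < Ew a b := by omega
    have hlt2 : 3 * n + pairOffset c d < Ew c d := by omega
    rw [hA1, hA2, fCnt_lt ha hb hab hlt1, fCnt_lt hc hd hcd hlt2]
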